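/- arXiv:2604.05214 — 2 statements merged into one kernel-verified Lean document; each statement's English description precedes it below -/
import Mathlib

section
/- Let g be the symmetric ternary operation of Example 4.1 on Z/4: g(x,x,x) = x, g(x,x,x+1) = x, g(x,x,x+2) = g(x,x,x+3) = x+2 (mod 4), and for pairwise distinct inputs x,y,z with {x,y,z,w} = Z/4, g(x,y,z) = w - 1 (mod 4). Then the partition of Z/4 into even and odd residues is a congruence of (Z/4; g), and on the quotient the induced operation is the majority operation on a two-element set. -/
/-- The symmetric ternary operation of Example 4.1 on `ZMod 4`. -/
def g41 (x y z : ZMod 4) : ZMod 4 :=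
  if x = y ∧ y = z then x
  else if x = y then (if z = x + 1 then x else x + 2)
  else if y = z then (if x = y + 1 then y else y + 2)
  else if x = z then (if y = x + 1 then x else x + 2)
  else 1 - x - y - z

/-- The even/odd partition is a congruence of `(ZMod 4; g41)` and the quotient
operation is the majority operation on a two-element set. -/
theorem g41_majority_quotient :
    (∀ x x' y y' z z' : ZMod 4,
      (x.val : ZMod 2) = (x'.val : ZMod 2) → (y.val : ZMod 2) = (y'.val : ZMod 2) →
      (z.val : ZMod 2) = (z'.val : ZMod 2) →
      ((g41 x y z).val : ZMod 2) = ((g41 x' y' z').val : ZMod 2)) ∧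
    (∀ x y z : ZMod 4,
      ((x.val : ZMod 2) = (y.val : ZMod 2) → ((g41 x y z).val : ZMod 2) = (x.val : ZMod 2)) ∧
      ((x.val : ZMod 2) = (z.val : ZMod 2) → ((g41 x y z).val : ZMod 2) = (x.val : ZMod 2)) ∧
      ((y.val : ZMod 2) = (z.val : ZMod 2) → ((g41 x y z).val : ZMod 2) = (y.val : ZMod 2))) := by
  constructor <;> decide
end

section
/- For the algebra (Z/4; g) of Example 4.1, the algebra is generated by any pair of elements lying in different classes of the even/odd partition: for any x, y ∈ Z/4 with x ≢ y (mod 2), the smallest subset containing x and y and closed under g is all of Z/4. -/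
lemma g41_step1 : ∀ a : ZMod 4, g41 a (a+1) (a+1) = a + 3 := by decide

lemma g41_step2 : ∀ a : ZMod 4, g41 a a (a+3) = a + 2 := by decide

lemma g41_gen (S : Set (ZMod 4))
    (hclosed : ∀ a ∈ S, ∀ b ∈ S, ∀ c ∈ S, g41 a b c ∈ S)
    (a : ZMod 4) (ha : a ∈ S) (ha1 : a + 1 ∈ S) : ∀ z : ZMod 4, z ∈ S := by
  have h3 : a + 3 ∈ S := by
    have := hclosed a ha (a+1) ha1 (a+1) ha1
    rwa [g41_step1] at this
  have h2 : a + 2 ∈ S := by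
    have := hclosed a ha a ha (a+3) h3
    rwa [g41_step2] at this
  intro z
  have hz : z = a ∨ z = a + 1 ∨ z = a + 2 ∨ z = a + 3 := by
    have : ∀ a z : ZMod 4, z = a ∨ z = a + 1 ∨ z = a + 2 ∨ z = a + 3 := by decide
    exact this a z
  rcases hz with h | h | h | h <;> subst h <;> assumption

/-- `(ZMod 4; g41)` is generated by any pair of elements of different parities. -/
theorem g41_two_generated (x y : ZMod 4) (hxy : x.val % 2 ≠ y.val % 2)
    (S : Set (ZMod 4)) (hx : x ∈ S) (hy : y ∈ S)
    (hclosed : ∀ a ∈ S, ∀ b ∈ S, ∀ c ∈ S, g41 a b c ∈ S) :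
    ∀ z : ZMod 4, z ∈ S := by
  have h : y = x + 1 ∨ x = y + 1 := by
    have : ∀ x y : ZMod 4, x.val % 2 ≠ y.val % 2 → y = x + 1 ∨ x = y + 1 := by decide
    exact this x y hxy
  rcases h with h | h
  · exact g41_gen S hclosed x hx (h ▸ hy)
  · exact g41_gen S hclosed y hy (h ▸ hx)
end
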